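/- arXiv:0912.5345 — 2 statements merged into one kernel-verified Lean document; each statement's English description precedes it below -/
import Mathlib

section
/- There are no positive integers x, y, z with x^4 + y^4 = z^2. -/
theorem stmt5 : ¬ ∃ x y z : ℕ, 0 < x ∧ 0 < y ∧ 0 < z ∧ x ^ 4 + y ^ 4 = z ^ 2 := by
  rintro ⟨x, y, z, hx, hy, hz, h⟩
  exact not_fermat_42 (a := (x:ℤ)) (b := (y:ℤ)) (c := (z:ℤ))
    (by exact_mod_cast hx.ne') (by exact_mod_cast hy.ne') (by exact_mod_cast h)
end

section
/- There are no positive integers x, y, z with x^3 + y^3 = z^3. -/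
theorem stmt6 : ¬ ∃ x y z : ℕ, 0 < x ∧ 0 < y ∧ 0 < z ∧ x ^ 3 + y ^ 3 = z ^ 3 := by
  rintro ⟨x, y, z, hx, hy, hz, h⟩
  exact fermatLastTheoremThree x y z hx.ne' hy.ne' hz.ne' h
end
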